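/- Let n be a positive integer with n ≡ 2 (mod 4). Then the limit A_n = lim_{k→∞} ∫₀^π |cosⁿ x − cosⁿ(kx)| dx (k ranging over the positive integers) exists and equals (16/(2ⁿ·π)) · Σ_{j=0}^{(n−2)/4} C(n,2j)/(n/2 − 2j)², where C(n,m) denotes the binomial coefficient. -/

import Mathlib

/-!
Cut `[0, π]` into the `k` intervals of length `π / k`, on each of which `cos (k x) ^ n` runs
through one full period while `cos x ^ n` moves by `O(1 / k)`. Hence the integral tends to the
average `(1 / π) ∫₀^π ∫₀^π |cos x ^ n - cos t ^ n| dt dx`. Since `cos ^ n` is symmetric about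
`π / 2` and decreasing on `[0, π / 2]`, this double integral equals
`8 ∫₀^{π/2} (π/2 - 2x) cos x ^ n dx`. Expanding `cos x ^ n` into the modes `cos ((2j - n) x)`,
for `n ≡ 2 mod 4` only the even `j` survive, and the symmetry `j ↦ n - j` halves the sum.
-/

open Real Filter MeasureTheory Topology Finset
open scoped NNReal

section Averaging

variable {H : ℝ → ℝ → ℝ} {T : ℝ} {L : ℝ≥0}

theorem abs_intervalIntegral_sub_intervalIntegral_le (hH : Continuous H.uncurry)
    (hlip : ∀ y, LipschitzWith L (H · y)) (a b x x' : ℝ) :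
    |(∫ y in a..b, H x y) - ∫ y in a..b, H x' y| ≤ L * |x - x'| * |b - a| := by
  rw [← intervalIntegral.integral_sub ((hH.uncurry_left x).intervalIntegrable a b)
    ((hH.uncurry_left x').intervalIntegrable a b), ← Real.norm_eq_abs]
  refine intervalIntegral.norm_integral_le_of_norm_le_const fun y _ => ?_
  simpa [Real.dist_eq] using (hlip y).dist_le_mul x x'

theorem abs_integral_apply_mul_sub_average_le (hT : 0 < T) (hH : Continuous H.uncurry)
    (hper : ∀ x, Function.Periodic (H x) T) (hlip : ∀ y, LipschitzWith L (H · y))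
    {k : ℝ} (hk : 0 < k) (a : ℝ) :
    |(∫ x in a..a + T / k, H x (k * x)) - (∫ x in a..a + T / k, ∫ y in 0..T, H x y) / T|
      ≤ 2 * L * (T / k) ^ 2 := by
  set δ := T / k with hδ
  set G := fun x => ∫ y in 0..T, H x y
  have hδ0 : 0 < δ := div_pos hT hk
  have hG : Continuous G :=
    intervalIntegral.continuous_parametric_intervalIntegral_of_continuous' hH 0 T
  have hdiag : Continuous fun x => H x (k * x) :=
    hH.comp (continuous_id.prodMk (continuous_const.mul continuous_id))
  have hHa : Continuous (H a) := hH.uncurry_left a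
  -- `k x` runs through exactly one period of `H a` while `x` runs through `[a, a + δ]`
  have hperiod : ∫ x in a..a + δ, H a (k * x) = G a / k := by
    rw [intervalIntegral.integral_comp_mul_left (H a) hk.ne', mul_add, mul_div_cancel₀ _ hk.ne',
      (hper a).intervalIntegral_add_eq (k * a) 0, zero_add, smul_eq_mul, inv_mul_eq_div]
  have hsplit : (∫ x in a..a + δ, H x (k * x)) - (∫ x in a..a + δ, G x) / T
      = ∫ x in a..a + δ, ((H x (k * x) - H a (k * x)) + (G a - G x) / T) := by
    rw [intervalIntegral.integral_add, intervalIntegral.integral_sub, intervalIntegral.integral_div,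
      intervalIntegral.integral_sub, intervalIntegral.integral_const, hperiod]
    · rw [add_sub_cancel_left, smul_eq_mul, hδ]
      field_simp
      ring
    all_goals exact Continuous.intervalIntegrable (by fun_prop) _ _
  rw [hsplit, ← Real.norm_eq_abs]
  calc _ ≤ 2 * L * δ * |a + δ - a| := by
        refine intervalIntegral.norm_integral_le_of_norm_le_const fun x hx => ?_
        rw [Set.uIoc_of_le (by linarith)] at hx
        have hxa : |x - a| ≤ δ := by rw [abs_le]; constructor <;> linarith [hx.1, hx.2]
        have h1 : |H x (k * x) - H a (k * x)| ≤ L * δ := by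
          have := (hlip (k * x)).dist_le_mul x a
          rw [Real.dist_eq, Real.dist_eq] at this
          exact this.trans (by gcongr)
        have h2 : |G a - G x| / T ≤ L * δ := by
          rw [div_le_iff₀ hT]
          have := abs_intervalIntegral_sub_intervalIntegral_le hH hlip 0 T a x
          rw [abs_sub_comm a x, sub_zero, abs_of_pos hT] at this
          calc _ ≤ _ := this
            _ ≤ L * δ * T := by gcongr
        rw [Real.norm_eq_abs]
        calc _ ≤ |H x (k * x) - H a (k * x)| + |(G a - G x) / T| := abs_add_le _ _
          _ ≤ L * δ + L * δ := by rw [abs_div, abs_of_pos hT]; gcongr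
          _ = 2 * L * δ := by ring
    _ = 2 * L * δ ^ 2 := by rw [add_sub_cancel_left, abs_of_pos hδ0]; ring

theorem abs_integral_apply_nat_mul_sub_average_le (hT : 0 < T) (hH : Continuous H.uncurry)
    (hper : ∀ x, Function.Periodic (H x) T) (hlip : ∀ y, LipschitzWith L (H · y))
    {k : ℕ} (hk : 0 < k) :
    |(∫ x in 0..T, H x (k * x)) - (∫ x in 0..T, ∫ y in 0..T, H x y) / T| ≤ 2 * L * T ^ 2 / k := by
  have hk' : (0 : ℝ) < k := Nat.cast_pos.mpr hk
  set p : ℕ → ℝ := fun i => i * (T / k) with hp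
  have hp_succ (i : ℕ) : p (i + 1) = p i + T / k := by simp only [hp]; push_cast; ring
  have hp0 : p 0 = 0 := by simp [hp]
  have hpk : p k = T := by simp only [hp]; field_simp
  have hdiag : Continuous fun x => H x (k * x) :=
    hH.comp (continuous_id.prodMk (continuous_const.mul continuous_id))
  have hG : Continuous fun x => ∫ y in 0..T, H x y :=
    intervalIntegral.continuous_parametric_intervalIntegral_of_continuous' hH 0 T
  have hsplit {f : ℝ → ℝ} (hf : Continuous f) :
      ∫ x in 0..T, f x = ∑ i ∈ range k, ∫ x in p i..p (i + 1), f x := by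
    rw [intervalIntegral.sum_integral_adjacent_intervals fun i _ => hf.intervalIntegrable _ _,
      hp0, hpk]
  rw [hsplit hdiag, hsplit hG, Finset.sum_div, ← Finset.sum_sub_distrib]
  calc _ ≤ ∑ i ∈ range k, 2 * L * (T / k) ^ 2 := by
        refine (Finset.abs_sum_le_sum_abs _ _).trans (Finset.sum_le_sum fun i _ => ?_)
        rw [hp_succ]
        exact abs_integral_apply_mul_sub_average_le hT hH hper hlip hk' (p i)
    _ = 2 * L * T ^ 2 / k := by
        rw [Finset.sum_const, Finset.card_range, nsmul_eq_mul]
        field_simp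

theorem tendsto_integral_apply_nat_mul (hT : 0 < T) (hH : Continuous H.uncurry)
    (hper : ∀ x, Function.Periodic (H x) T) (hlip : ∀ y, LipschitzWith L (H · y)) :
    Tendsto (fun k : ℕ => ∫ x in 0..T, H x (k * x)) atTop
      (𝓝 ((∫ x in 0..T, ∫ y in 0..T, H x y) / T)) := by
  rw [← tendsto_sub_nhds_zero_iff]
  refine squeeze_zero_norm' ?_ (tendsto_const_div_atTop_nhds_zero_nat (2 * L * T ^ 2))
  filter_upwards [eventually_gt_atTop 0] with k hk
  exact abs_integral_apply_nat_mul_sub_average_le hT hH hper hlip hk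

end Averaging

theorem Real.lipschitzWith_cos_pow (n : ℕ) : LipschitzWith n fun x => cos x ^ n := by
  refine lipschitzWith_of_nnnorm_deriv_le (by fun_prop) fun x => ?_
  rw [← NNReal.coe_le_coe, coe_nnnorm, Real.norm_eq_abs, NNReal.coe_natCast]
  have hderiv : deriv (fun x => cos x ^ n) x = n * cos x ^ (n - 1) * -sin x := by simp
  rw [hderiv, abs_mul, abs_mul, abs_neg, abs_pow, Nat.abs_cast]
  calc _ ≤ (n : ℝ) * 1 * 1 := by
        gcongr
        · exact pow_le_one₀ (abs_nonneg _) (abs_cos_le_one x)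
        · exact abs_sin_le_one x
    _ = n := by ring

theorem LipschitzWith.abs_sub_const {f : ℝ → ℝ} {K : ℝ≥0} (hf : LipschitzWith K f) (c : ℝ) :
    LipschitzWith K fun x => |f x - c| :=
  LipschitzWith.of_dist_le_mul fun x y => by
    calc dist |f x - c| |f y - c| ≤ |(f x - c) - (f y - c)| := abs_abs_sub_abs_le_abs_sub _ _
      _ = dist (f x) (f y) := by rw [sub_sub_sub_cancel_right, Real.dist_eq]
      _ ≤ K * dist x y := hf.dist_le_mul x y

theorem intervalIntegral.integral_eq_two_mul_integral_half {g : ℝ → ℝ} {a : ℝ}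
    (hg : ∀ x, g (a - x) = g x) (hint : IntervalIntegrable g volume 0 a) :
    ∫ x in 0..a, g x = 2 * ∫ x in 0..a / 2, g x := by
  have hmid : a / 2 ∈ Set.uIcc 0 a := by
    rw [Set.mem_uIcc]
    rcases le_total 0 a with h | h
    · exact .inl ⟨by linarith, by linarith⟩
    · exact .inr ⟨by linarith, by linarith⟩
  have hreflect : ∫ x in a / 2..a, g x = ∫ x in 0..a / 2, g x := by
    calc ∫ x in a / 2..a, g x = ∫ x in 0..a / 2, g (a - x) := by
          rw [integral_comp_sub_left, sub_zero, sub_half]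
      _ = ∫ x in 0..a / 2, g x := by simp only [hg]
  rw [← integral_add_adjacent_intervals
      (hint.mono_set (Set.uIcc_subset_uIcc Set.left_mem_uIcc hmid))
      (hint.mono_set (Set.uIcc_subset_uIcc hmid Set.right_mem_uIcc)), hreflect, two_mul]

theorem integral_abs_sub_of_antitoneOn {f : ℝ → ℝ} {a x : ℝ} (hf : Continuous f)
    (hanti : AntitoneOn f (Set.Icc 0 a)) (hx : x ∈ Set.Icc 0 a) :
    ∫ t in 0..a, |f x - f t| = 2 * (∫ t in 0..x, f t) - (∫ t in 0..a, f t) + (a - 2 * x) * f x := by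
  obtain ⟨hx0, hxa⟩ := hx
  have hleft : ∫ t in 0..x, |f x - f t| = (∫ t in 0..x, f t) - x * f x := by
    rw [intervalIntegral.integral_congr (g := fun t => f t - f x) fun t ht => ?_,
      intervalIntegral.integral_sub (hf.intervalIntegrable _ _) intervalIntegrable_const,
      intervalIntegral.integral_const, smul_eq_mul, sub_zero]
    rw [Set.uIcc_of_le hx0] at ht
    rw [abs_of_nonpos (sub_nonpos.2 (hanti ⟨ht.1, ht.2.trans hxa⟩ ⟨hx0, hxa⟩ ht.2)), neg_sub]
  have hright : ∫ t in x..a, |f x - f t| = (a - x) * f x - ∫ t in x..a, f t := by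
    rw [intervalIntegral.integral_congr (g := fun t => f x - f t) fun t ht => ?_,
      intervalIntegral.integral_sub intervalIntegrable_const (hf.intervalIntegrable _ _),
      intervalIntegral.integral_const, smul_eq_mul]
    rw [Set.uIcc_of_le hxa] at ht
    rw [abs_of_nonneg (sub_nonneg.2 (hanti ⟨hx0, hxa⟩ ⟨hx0.trans ht.1, ht.2⟩ ht.1))]
  have hsplit {g : ℝ → ℝ} (hg : Continuous g) :
      ∫ t in 0..a, g t = (∫ t in 0..x, g t) + ∫ t in x..a, g t :=
    (intervalIntegral.integral_add_adjacent_intervals (hg.intervalIntegrable _ _)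
      (hg.intervalIntegrable _ _)).symm
  rw [hsplit (g := fun t => |f x - f t|) (by fun_prop), hleft, hright, hsplit hf]
  ring

theorem integral_integral_abs_sub_of_antitoneOn {f : ℝ → ℝ} {a : ℝ} (ha : 0 ≤ a)
    (hf : Continuous f) (hanti : AntitoneOn f (Set.Icc 0 a)) :
    ∫ x in 0..a, ∫ t in 0..a, |f x - f t| = 2 * ∫ x in 0..a, (a - 2 * x) * f x := by
  set F := fun x => ∫ t in 0..x, f t
  have hF (x : ℝ) : HasDerivAt F (f x) x :=
    intervalIntegral.integral_hasDerivAt_right (hf.intervalIntegrable _ _)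
      hf.aestronglyMeasurable.stronglyMeasurableAtFilter hf.continuousAt
  have hF_cont : Continuous F := continuous_iff_continuousAt.2 fun x => (hF x).continuousAt
  have hΨ (x : ℝ) : HasDerivAt (fun x => (2 * x - a) * F x - x * F a)
      (2 * F x - F a + (2 * x - a) * f x) x := by
    have := ((((hasDerivAt_id x).const_mul 2).sub_const a).mul (hF x)).sub
      ((hasDerivAt_id x).mul_const (F a))
    refine this.congr_deriv ?_
    simp only [id]
    ring
  calc ∫ x in 0..a, ∫ t in 0..a, |f x - f t|
      = ∫ x in 0..a, (2 * ((a - 2 * x) * f x) + (2 * F x - F a + (2 * x - a) * f x)) := by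
        refine intervalIntegral.integral_congr fun x hx => ?_
        rw [Set.uIcc_of_le ha] at hx
        simp only [integral_abs_sub_of_antitoneOn hf hanti hx, F]
        ring
    _ = 2 * (∫ x in 0..a, (a - 2 * x) * f x) + ((2 * a - a) * F a - a * F a - (-a * F 0)) := by
        rw [intervalIntegral.integral_add, intervalIntegral.integral_const_mul,
          intervalIntegral.integral_eq_sub_of_hasDerivAt (fun x _ => hΨ x)]
        · ring
        all_goals exact Continuous.intervalIntegrable (by fun_prop) _ _
    _ = 2 * ∫ x in 0..a, (a - 2 * x) * f x := by
        simp only [F, intervalIntegral.integral_same]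
        ring

theorem integral_integral_abs_cos_pow_sub {n : ℕ} (hn : Even n) :
    ∫ x in 0..π, ∫ t in 0..π, |cos x ^ n - cos t ^ n|
      = 8 * ∫ x in 0..π / 2, (π / 2 - 2 * x) * cos x ^ n := by
  have hsymm (x : ℝ) : cos (π - x) ^ n = cos x ^ n := by rw [cos_pi_sub, hn.neg_pow]
  have hanti : AntitoneOn (fun x => cos x ^ n) (Set.Icc 0 (π / 2)) := fun s hs t ht hst =>
    pow_le_pow_left₀ (cos_nonneg_of_mem_Icc ⟨by linarith [pi_pos, ht.1], ht.2⟩)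
      (antitoneOn_cos ⟨hs.1, by linarith [pi_pos, hs.2]⟩ ⟨ht.1, by linarith [pi_pos, ht.2]⟩ hst) n
  have hG : Continuous fun x => ∫ t in 0..π, |cos x ^ n - cos t ^ n| :=
    intervalIntegral.continuous_parametric_intervalIntegral_of_continuous' (by fun_prop) _ _
  rw [intervalIntegral.integral_eq_two_mul_integral_half (fun x => by simp only [hsymm])
      (hG.intervalIntegrable _ _),
    intervalIntegral.integral_congr fun x _ => intervalIntegral.integral_eq_two_mul_integral_half
      (fun t => by simp only [hsymm]) (Continuous.intervalIntegrable (by fun_prop) _ _),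
    intervalIntegral.integral_const_mul,
    integral_integral_abs_sub_of_antitoneOn (by positivity) (by fun_prop) hanti]
  ring

theorem Real.cos_pow_eq_sum_choose_mul_cos (n : ℕ) (x : ℝ) :
    cos x ^ n = (∑ j ∈ range (n + 1), n.choose j * cos ((2 * j - n) * x)) / 2 ^ n := by
  have h : (((2 * cos x) ^ n : ℝ) : ℂ)
      = ∑ j ∈ range (n + 1), ((n.choose j : ℝ) : ℂ) *
          Complex.exp (((2 * j - n) * x : ℝ) * Complex.I) := by
    rw [Complex.ofReal_pow, Complex.ofReal_mul, Complex.ofReal_ofNat, Complex.ofReal_cos,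
      Complex.two_cos, add_pow]
    refine sum_congr rfl fun j hj => ?_
    have hjn : j ≤ n := Nat.lt_succ_iff.mp (mem_range.mp hj)
    rw [← Complex.exp_nat_mul, ← Complex.exp_nat_mul, ← Complex.exp_add, mul_comm]
    congr 2
    push_cast [Nat.cast_sub hjn]
    ring
  have h2 := congrArg Complex.re h
  simp only [Complex.ofReal_re, Complex.re_sum, Complex.re_ofReal_mul,
    Complex.exp_ofReal_mul_I_re] at h2
  rw [eq_div_iff (by positivity), ← h2, mul_pow]
  ring

-- At `c = 0` both sides vanish, the right-hand side through `x / 0 = 0`.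
theorem integral_sub_two_mul_mul_cos (a c : ℝ) :
    ∫ x in 0..a, (a - 2 * x) * cos (c * x)
      = 2 * (1 - cos (c * a)) / c ^ 2 - a * sin (c * a) / c := by
  rcases eq_or_ne c 0 with rfl | hc
  · rw [intervalIntegral.integral_congr (g := fun x => a - 2 * x) fun x _ => by simp,
      intervalIntegral.integral_sub intervalIntegrable_const
        (Continuous.intervalIntegrable (by fun_prop) _ _),
      intervalIntegral.integral_const_mul, integral_id]
    simp only [intervalIntegral.integral_const, sub_zero, smul_eq_mul, zero_mul, cos_zero,
      sub_self, mul_zero, div_zero]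
    ring
  have hderiv (x : ℝ) :
      HasDerivAt (fun x => (a - 2 * x) * sin (c * x) / c - 2 * cos (c * x) / c ^ 2)
        ((a - 2 * x) * cos (c * x)) x := by
    have hlin : HasDerivAt (fun x => c * x) c x := by simpa using (hasDerivAt_id x).const_mul c
    have := ((((hasDerivAt_id x).const_mul 2).const_sub a).mul ((hasDerivAt_sin _).comp x hlin)
      |>.div_const c).sub (((hasDerivAt_cos _).comp x hlin).const_mul 2 |>.div_const (c ^ 2))
    refine this.congr_deriv ?_
    simp only [Function.comp, id]
    field_simp
    ring
  rw [intervalIntegral.integral_eq_sub_of_hasDerivAt (fun x _ => hderiv x)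
    (Continuous.intervalIntegrable (by fun_prop) _ _)]
  simp only [mul_zero, sub_zero, sin_zero, zero_div, cos_zero, mul_one, zero_sub, sub_neg_eq_add]
  field_simp
  ring

theorem integral_sub_two_mul_mul_cos_pow_two_mul (m : ℕ) :
    ∫ x in 0..π / 2, (π / 2 - 2 * x) * cos x ^ (2 * m)
      = (∑ j ∈ range (2 * m + 1),
          (2 * m).choose j * (1 - (-1) ^ ((j : ℤ) - m)) / (2 * ((j : ℝ) - m) ^ 2))
        / 2 ^ (2 * m) := by
  simp_rw [cos_pow_eq_sum_choose_mul_cos, mul_div_assoc', Finset.mul_sum]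
  rw [intervalIntegral.integral_div, intervalIntegral.integral_finsetSum
    fun j _ => Continuous.intervalIntegrable (by fun_prop) _ _]
  congr 1
  refine sum_congr rfl fun j _ => ?_
  have hfreq : ((2 * j - (2 * m : ℕ)) * (π / 2) : ℝ) = (j - m : ℤ) * π := by push_cast; ring
  simp_rw [mul_left_comm (π / 2 - 2 * _), intervalIntegral.integral_const_mul,
    integral_sub_two_mul_mul_cos, hfreq, sin_int_mul_pi, cos_int_mul_pi]
  have hsq : ((2 * j - (2 * m : ℕ)) : ℝ) ^ 2 = 2 * (2 * ((j : ℝ) - m) ^ 2) := by push_cast; ring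
  rw [mul_zero, zero_div, sub_zero, hsq, mul_div_mul_left _ _ two_ne_zero, mul_div_assoc]

theorem Finset.sum_range_two_mul_add_one_of_odd_eq_zero {M : Type*} [AddCommMonoid M]
    (f : ℕ → M) (hf : ∀ i, f (2 * i + 1) = 0) (k : ℕ) :
    ∑ j ∈ range (2 * k + 1), f j = ∑ i ∈ range (k + 1), f (2 * i) := by
  induction k with
  | zero => simp
  | succ k ih =>
    rw [show 2 * (k + 1) + 1 = 2 * k + 1 + 1 + 1 by ring, sum_range_succ, sum_range_succ, ih, hf,
      add_zero, sum_range_succ _ (k + 1)]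
    rfl

theorem Finset.sum_range_two_mul_of_reflect {M : Type*} [AddCommMonoid M]
    (f : ℕ → M) (k : ℕ) (hf : ∀ i < k, f (2 * k - 1 - i) = f i) :
    ∑ i ∈ range (2 * k), f i = 2 • ∑ i ∈ range k, f i := by
  rw [two_mul, sum_range_add, two_nsmul, ← sum_range_reflect f k]
  congr 1
  refine sum_congr rfl fun i hi => ?_
  have hi : i < k := mem_range.mp hi
  rw [← hf (k - 1 - i) (by omega)]
  congr 1
  omega

theorem sum_choose_mul_one_sub_neg_one_zpow_div {m q : ℕ} (hm : m = 2 * q + 1) :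
    ∑ j ∈ range (2 * m + 1),
        (2 * m).choose j * (1 - (-1) ^ ((j : ℤ) - m)) / (2 * ((j : ℝ) - m) ^ 2)
      = 2 * ∑ i ∈ range (q + 1), (2 * m).choose (2 * i) / ((m : ℝ) - 2 * i) ^ 2 := by
  have hodd (i : ℕ) : ((2 * m).choose (2 * i + 1) : ℝ) * (1 - (-1) ^ (((2 * i + 1 : ℕ) : ℤ) - m))
      / (2 * (((2 * i + 1 : ℕ) : ℝ) - m) ^ 2) = 0 := by
    rw [Even.neg_one_zpow ⟨i - q, by push_cast [hm]; ring⟩, sub_self, mul_zero, zero_div]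
  have heven (i : ℕ) : ((2 * m).choose (2 * i) : ℝ) * (1 - (-1) ^ (((2 * i : ℕ) : ℤ) - m))
      / (2 * (((2 * i : ℕ) : ℝ) - m) ^ 2) = (2 * m).choose (2 * i) / ((m : ℝ) - 2 * i) ^ 2 := by
    rw [Odd.neg_one_zpow ⟨i - q - 1, by push_cast [hm]; ring⟩,
      show (((2 * i : ℕ) : ℝ) - m) ^ 2 = ((m : ℝ) - 2 * i) ^ 2 by push_cast; ring,
      show (1 : ℝ) - -1 = 2 by norm_num, mul_comm _ (2 : ℝ), mul_div_mul_left _ _ two_ne_zero]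
  have hreflect : ∀ i < q + 1, ((2 * m).choose (2 * (2 * (q + 1) - 1 - i)) : ℝ)
      / ((m : ℝ) - 2 * ((2 * (q + 1) - 1 - i : ℕ) : ℝ)) ^ 2
      = (2 * m).choose (2 * i) / ((m : ℝ) - 2 * i) ^ 2 := by
    intro i hi
    rw [show 2 * (q + 1) - 1 - i = m - i by omega, show 2 * (m - i) = 2 * m - 2 * i by omega,
      Nat.choose_symm (by omega), Nat.cast_sub (by omega)]
    ring
  rw [sum_range_two_mul_add_one_of_odd_eq_zero _ hodd, sum_congr rfl fun i _ => heven i,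
    show m + 1 = 2 * (q + 1) by omega, sum_range_two_mul_of_reflect _ _ hreflect, nsmul_eq_mul,
    Nat.cast_ofNat]

theorem area_even_power_two_mod_four_general (n : ℕ) (hmod : n % 4 = 2) :
    Tendsto (fun k : ℕ => ∫ x in (0:ℝ)..π, |Real.cos x ^ n - Real.cos (k * x) ^ n|)
      atTop
      (𝓝 (16 / (2 ^ n * π) *
        ∑ j ∈ Finset.range ((n - 2) / 4 + 1),
          (n.choose (2 * j) : ℝ) / ((n : ℝ) / 2 - 2 * (j : ℝ)) ^ 2)) := by
  obtain ⟨q, rfl⟩ : ∃ q, n = 2 * (2 * q + 1) := ⟨n / 4, by omega⟩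
  have hn : Even (2 * (2 * q + 1)) := even_two_mul _
  have hlim := tendsto_integral_apply_nat_mul
    (H := fun x y => |cos x ^ (2 * (2 * q + 1)) - cos y ^ (2 * (2 * q + 1))|)
    pi_pos (by fun_prop) (fun x y => by simp only [cos_add_pi, hn.neg_pow])
    (fun y => (lipschitzWith_cos_pow _).abs_sub_const _)
  rw [integral_integral_abs_cos_pow_sub hn, integral_sub_two_mul_mul_cos_pow_two_mul,
    sum_choose_mul_one_sub_neg_one_zpow_div rfl] at hlim
  convert hlim using 2
  rw [show (2 * (2 * q + 1) - 2) / 4 = q by omega]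
  push_cast
  field_simp
  ring

theorem area_even_power_two_mod_four (n : ℕ) (hpos : 0 < n) (hmod : n % 4 = 2) :
    Tendsto (fun k : ℕ => ∫ x in (0:ℝ)..π, |Real.cos x ^ n - Real.cos (k * x) ^ n|)
      atTop
      (𝓝 (16 / (2 ^ n * π) *
        ∑ j ∈ Finset.range ((n - 2) / 4 + 1),
          (n.choose (2 * j) : ℝ) / ((n : ℝ) / 2 - 2 * (j : ℝ)) ^ 2)) :=
  area_even_power_two_mod_four_general n hmod
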